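/- For every integer n ≥ 2 and all constants c₀, c₁ ∈ (0,1) there exists c₂ > 0, depending only on n, c₀ and c₁, with the following property: for every δ ∈ (0, 1/100), every real N ≥ 1, and every convex 9δ-discretized set E ⊆ ℝ^{n−1} with diam(E) ≤ 1 and c₁·√N·δ^{n−1} ≤ vol_{n−1}(E) ≤ c₁^{−1}·√N·δ^{n−1}, there exists a finite essentially distinct family of δ-tubes in ℝⁿ of cardinality at least c₂·N, all of whose members are contained in E × [0, 2] ⊆ ℝ^{n−1} × ℝ = ℝⁿ. -/

import Mathlib

/-!
Let `D` be the set of centres of the `9δ`-balls contained in `E`: it is convex and `E` is its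
`9δ`-neighbourhood. Take a maximal `r`-separated subset `P` of `D`, with `r = 32δ/c₀`. The
`9δ`-balls around `P` are disjoint and lie in `E`, so `P` is finite, while the `(9δ + r)`-balls
around `P` cover `E`, so `#P ≳ vol E / δ^{n-1} ≳ √N`.

For every pair `(p, q) ∈ P × P` take the tube centred at `((p + q)/2, 1)` whose direction has
horizontal part `(q - p)/2`. Its horizontal shadow is the middle half of the segment `[p, q]`,
thickened by `δ/2`, so the tube lies in `E × [0, 2]`. Two of these tubes either have directions
at angle `≳ r`, and then meet in a set of relative volume `≲ δ/r ≤ c₀`, or have directions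
closer than `r/4`, and then their centres are `≳ r` apart and they are disjoint. This gives
`#P² ≳ N` essentially distinct tubes.
-/

open MeasureTheory

noncomputable section

/-- The `δ`-tube in `ℝⁿ` with center `a` and direction `e`. -/
def euclTube (n : ℕ) (δ : ℝ) (a e : EuclideanSpace ℝ (Fin n)) :
    Set (EuclideanSpace ℝ (Fin n)) :=
  {x | |(inner ℝ (x - a) e : ℝ)| ≤ 1 / 2 ∧
       ‖(x - a) - (inner ℝ (x - a) e : ℝ) • e‖ ≤ δ / 2}

/-- An indexed family of `δ`-tubes (given by centers `a i` and directions `e i`) is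
essentially distinct with parameter `c₀`. -/
def EssentiallyDistinct (n : ℕ) (δ c₀ : ℝ) {ι : Type*}
    (a e : ι → EuclideanSpace ℝ (Fin n)) : Prop :=
  ∀ i j, i ≠ j →
    volume (euclTube n δ (a i) (e i) ∩ euclTube n δ (a j) (e j)) ≤
      ENNReal.ofReal c₀ * volume (euclTube n δ (a i) (e i))

/-- A set in `ℝ^m` is `r`-discretized if it is a union of closed balls of radius `r`. -/
def IsDiscretized (m : ℕ) (r : ℝ) (E : Set (EuclideanSpace ℝ (Fin m))) : Prop :=
  ∃ S : Set (EuclideanSpace ℝ (Fin m)), E = ⋃ x ∈ S, Metric.closedBall x r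

/-- The cylinder `E × I ⊆ ℝⁿ = ℝ^{n-1} × ℝ`, under the canonical isometric
identification (first `n-1` coordinates, last coordinate). -/
def cylSet (n : ℕ) (hn : 0 < n) (E : Set (EuclideanSpace ℝ (Fin (n - 1)))) (I : Set ℝ) :
    Set (EuclideanSpace ℝ (Fin n)) :=
  {y | WithLp.toLp 2 (fun i : Fin (n - 1) => y ⟨i.1, lt_of_lt_of_le i.2 (Nat.sub_le n 1)⟩) ∈ E ∧
       y ⟨n - 1, Nat.sub_lt hn one_pos⟩ ∈ I}

open Metric
open scoped RealInnerProductSpace ENNReal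

section TubeSlab

variable {F : Type*} [NormedAddCommGroup F] [InnerProductSpace ℝ F] {δ : ℝ} {a a' e e' : F}
  {I I' : Set ℝ}

lemma norm_sq_sub_inner_sq_le (he : ‖e‖ = 1) (w : F) (t : ℝ) :
    ‖w‖ ^ 2 - ⟪w, e⟫ ^ 2 ≤ ‖w - t • e‖ ^ 2 := by
  rw [norm_sub_sq_real, inner_smul_right, norm_smul, he, Real.norm_eq_abs, mul_one, sq_abs]
  nlinarith [sq_nonneg (t - ⟪w, e⟫)]

lemma norm_sub_div_two_le_sqrt_one_sub_inner_sq (he : ‖e‖ = 1) (he' : ‖e'‖ = 1)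
    (hinner : 0 ≤ ⟪e, e'⟫) : ‖e - e'‖ / 2 ≤ √(1 - ⟪e, e'⟫ ^ 2) := by
  have hle : ⟪e, e'⟫ ≤ 1 := by simpa [he, he'] using real_inner_le_norm e e'
  apply Real.le_sqrt_of_sq_le
  rw [div_pow, norm_sub_sq_real, he, he']
  nlinarith

lemma sub_inner_smul_sub_sub_inner_smul (x y b f : F) :
    (x - b) - ⟪x - b, f⟫ • f - ((y - b) - ⟪y - b, f⟫ • f) = (x - y) - ⟪x - y, f⟫ • f := by
  simp only [inner_sub_left]; module

def tubeSlab (δ : ℝ) (a e : F) (I : Set ℝ) : Set F :=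
  {x | ⟪x - a, e⟫ ∈ I ∧ ‖(x - a) - ⟪x - a, e⟫ • e‖ ≤ δ / 2}

lemma isBounded_tubeSlab (he : ‖e‖ = 1) (hI : Bornology.IsBounded I) :
    Bornology.IsBounded (tubeSlab δ a e I) := by
  obtain ⟨C, hC⟩ := hI.exists_norm_le
  refine (isBounded_closedBall (x := a) (r := C + δ / 2)).subset fun x ⟨hxI, hx⟩ => ?_
  have hdecomp : x - a = ⟪x - a, e⟫ • e + ((x - a) - ⟪x - a, e⟫ • e) := by abel
  rw [mem_closedBall, dist_eq_norm, hdecomp]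
  refine (norm_add_le _ _).trans (add_le_add ?_ hx)
  rw [norm_smul, he, mul_one]
  exact hC _ hxI

lemma abs_inner_sub_mul_sqrt_le (he : ‖e‖ = 1) (he' : ‖e'‖ = 1) {x y : F}
    (hx : x ∈ tubeSlab δ a e I ∩ tubeSlab δ a' e' I')
    (hy : y ∈ tubeSlab δ a e I ∩ tubeSlab δ a' e' I') :
    |⟪x - y, e⟫| * √(1 - ⟪e, e'⟫ ^ 2) ≤ 2 * δ := by
  obtain ⟨⟨-, hx⟩, -, hx'⟩ := hx
  obtain ⟨⟨-, hy⟩, -, hy'⟩ := hy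
  set τ := ⟪x - y, e⟫
  set τ' := ⟪x - y, e'⟫
  have hclose : ‖τ • e - τ' • e'‖ ≤ 2 * δ := calc
    ‖τ • e - τ' • e'‖ = ‖((x - y) - τ' • e') - ((x - y) - τ • e)‖ := by congr 1; abel
    _ ≤ (δ / 2 + δ / 2) + (δ / 2 + δ / 2) := by
      rw [← sub_inner_smul_sub_sub_inner_smul x y a', ← sub_inner_smul_sub_sub_inner_smul x y a]
      exact (norm_sub_le _ _).trans (add_le_add ((norm_sub_le _ _).trans (add_le_add hx' hy'))
        ((norm_sub_le _ _).trans (add_le_add hx hy)))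
    _ = 2 * δ := by ring
  have hsq : τ ^ 2 * (1 - ⟪e, e'⟫ ^ 2) ≤ (2 * δ) ^ 2 := calc
    τ ^ 2 * (1 - ⟪e, e'⟫ ^ 2) = ‖τ • e‖ ^ 2 - ⟪τ • e, e'⟫ ^ 2 := by
      rw [norm_smul, he, real_inner_smul_left, Real.norm_eq_abs, mul_one, sq_abs]; ring
    _ ≤ ‖τ • e - τ' • e'‖ ^ 2 := norm_sq_sub_inner_sq_le he' _ _
    _ ≤ (2 * δ) ^ 2 := pow_le_pow_left₀ (norm_nonneg _) hclose 2
  have hδ : 0 ≤ δ := by linarith [norm_nonneg (x - a - ⟪x - a, e⟫ • e)]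
  calc |τ| * √(1 - ⟪e, e'⟫ ^ 2) = √(τ ^ 2 * (1 - ⟪e, e'⟫ ^ 2)) := by
        rw [Real.sqrt_mul (sq_nonneg τ), Real.sqrt_sq_eq_abs]
    _ ≤ √((2 * δ) ^ 2) := Real.sqrt_le_sqrt hsq
    _ = 2 * δ := Real.sqrt_sq (by positivity)

lemma norm_sq_sub_inner_sq_le_of_mem_inter (he : ‖e‖ = 1) {x : F}
    (hx : x ∈ tubeSlab δ a e I ∩ tubeSlab δ a' e' (Set.Icc (-(1 / 2)) (1 / 2))) :
    ‖a - a'‖ ^ 2 - ⟪a - a', e⟫ ^ 2 ≤ (‖e - e'‖ / 2 + δ) ^ 2 := by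
  obtain ⟨⟨-, hx⟩, ht', hx'⟩ := hx
  set t := ⟪x - a, e⟫
  set t' := ⟪x - a', e'⟫
  have hclose : ‖(a - a') - (t' - t) • e‖ ≤ ‖e - e'‖ / 2 + δ := calc
    ‖(a - a') - (t' - t) • e‖ = ‖t' • (e' - e) + ((x - a' - t' • e') - (x - a - t • e))‖ := by
      congr 1; module
    _ ≤ |t'| * ‖e - e'‖ + (δ / 2 + δ / 2) := by
      rw [← Real.norm_eq_abs, norm_sub_rev e e', ← norm_smul]
      exact (norm_add_le _ _).trans
        (add_le_add_right ((norm_sub_le _ _).trans (add_le_add hx' hx)) _)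
    _ ≤ ‖e - e'‖ / 2 + δ := by nlinarith [norm_nonneg (e - e'), abs_le.2 ht']
  calc ‖a - a'‖ ^ 2 - ⟪a - a', e⟫ ^ 2 ≤ ‖(a - a') - (t' - t) • e‖ ^ 2 :=
        norm_sq_sub_inner_sq_le he _ _
    _ ≤ (‖e - e'‖ / 2 + δ) ^ 2 := pow_le_pow_left₀ (norm_nonneg _) hclose 2

variable [FiniteDimensional ℝ F] [MeasurableSpace F] [BorelSpace F] (μ : Measure F)
  [μ.IsAddHaarMeasure]

/-- The push-forward of `μ` restricted to the infinite cylinder under `x ↦ ⟪x - a, e⟫` is a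
translation invariant measure on `ℝ`, hence a multiple of Lebesgue measure. -/
lemma exists_measure_tubeSlab_Icc (he : ‖e‖ = 1) :
    ∃ C : ℝ≥0∞, ∀ l u : ℝ, μ (tubeSlab δ a e (Set.Icc l u)) = C * ENNReal.ofReal (u - l) := by
  set f : F → ℝ := fun x => ⟪x - a, e⟫
  set cyl : Set F := {x | ‖(x - a) - ⟪x - a, e⟫ • e‖ ≤ δ / 2}
  have hf : Measurable f := by fun_prop
  set ν : Measure ℝ := (μ.restrict cyl).map f
  have hν : ∀ I : Set ℝ, MeasurableSet I → ν I = μ (tubeSlab δ a e I) := fun I hI => by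
    rw [Measure.map_apply hf hI, Measure.restrict_apply (hf hI)]
    rfl
  have : IsFiniteMeasureOnCompacts ν := ⟨fun K hK => by
    rw [hν K hK.measurableSet]
    exact (isBounded_tubeSlab he hK.isBounded).measure_lt_top⟩
  have : ν.IsAddLeftInvariant := ⟨fun t => by
    ext I hI
    have hshift : tubeSlab δ a e ((t + ·) ⁻¹' I) = (· + t • e) ⁻¹' tubeSlab δ a e I := by
      ext x
      simp only [tubeSlab, Set.mem_preimage, Set.mem_ofPred_eq, add_sub_right_comm x (t • e) a,
        inner_add_left, real_inner_smul_left, real_inner_self_eq_norm_sq, he]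
      rw [add_comm t, one_pow, mul_one, add_smul, add_sub_add_right_eq_sub]
    rw [Measure.map_apply (measurable_const_add t) hI, hν _ (measurable_const_add t hI), hν _ hI,
      hshift, measure_preimage_add_right]⟩
  refine ⟨ν.addHaarScalarFactor volume, fun l u => ?_⟩
  have h := congrArg (fun m : Measure ℝ => m (Set.Icc l u)) (ν.isAddLeftInvariant_eq_smul volume)
  rwa [hν _ measurableSet_Icc, Measure.smul_apply, Real.volume_Icc, ENNReal.smul_def,
    smul_eq_mul] at h

lemma measure_tubeSlab_inter_le {c₀ : ℝ} (hδ : 0 < δ) (he : ‖e‖ = 1) (he' : ‖e'‖ = 1)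
    (hangle : 4 * δ ≤ c₀ * √(1 - ⟪e, e'⟫ ^ 2)) :
    μ (tubeSlab δ a e (Set.Icc (-(1 / 2)) (1 / 2)) ∩ tubeSlab δ a' e' I') ≤
      ENNReal.ofReal c₀ * μ (tubeSlab δ a e (Set.Icc (-(1 / 2)) (1 / 2))) := by
  set T := tubeSlab δ a e (Set.Icc (-(1 / 2)) (1 / 2)) ∩ tubeSlab δ a' e' I'
  set γ := √(1 - ⟪e, e'⟫ ^ 2)
  have hγ : 0 < γ := (Real.sqrt_nonneg _).lt_of_ne fun h => by
    rw [show γ = 0 from h.symm, mul_zero] at hangle; linarith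
  rcases T.eq_empty_or_nonempty with hT | ⟨x₀, hx₀⟩
  · simp [hT]
  obtain ⟨C, hC⟩ := exists_measure_tubeSlab_Icc (δ := δ) (a := a) μ he
  set t₀ := ⟪x₀ - a, e⟫
  have hsub : T ⊆ tubeSlab δ a e (Set.Icc (t₀ - 2 * δ / γ) (t₀ + 2 * δ / γ)) := fun x hx => by
    have hwidth : |⟪x - a, e⟫ - t₀| ≤ 2 * δ / γ := by
      rw [le_div_iff₀ hγ, ← inner_sub_left, sub_sub_sub_cancel_right]
      exact abs_inner_sub_mul_sqrt_le he he' hx hx₀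
    exact ⟨Set.mem_Icc.2 ⟨by linarith [(abs_le.1 hwidth).1], by linarith [(abs_le.1 hwidth).2]⟩,
      hx.1.2⟩
  calc μ T ≤ C * ENNReal.ofReal (4 * δ / γ) := by
        refine (measure_mono hsub).trans_eq ?_
        rw [hC]; ring_nf
    _ ≤ C * ENNReal.ofReal c₀ := by
        gcongr
        rwa [div_le_iff₀ hγ]
    _ = ENNReal.ofReal c₀ * μ (tubeSlab δ a e (Set.Icc (-(1 / 2)) (1 / 2))) := by
        rw [hC]; norm_num; ring

end TubeSlab

lemma euclTube_eq_tubeSlab (n : ℕ) (δ : ℝ) (a e : EuclideanSpace ℝ (Fin n)) :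
    euclTube n δ a e = tubeSlab δ a e (Set.Icc (-(1 / 2)) (1 / 2)) := by
  ext x
  simp [euclTube, tubeSlab, abs_le]

lemma EssentiallyDistinct.comp {n : ℕ} {δ c₀ : ℝ} {ι κ : Type*}
    {a e : ι → EuclideanSpace ℝ (Fin n)} (h : EssentiallyDistinct n δ c₀ a e) {f : κ → ι}
    (hf : Function.Injective f) : EssentiallyDistinct n δ c₀ (a ∘ f) (e ∘ f) :=
  fun i j hij => h (f i) (f j) (hf.ne hij)

namespace EuclideanSpace

variable {m : ℕ}

def snoc (v : EuclideanSpace ℝ (Fin m)) (t : ℝ) : EuclideanSpace ℝ (Fin (m + 1)) :=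
  WithLp.toLp 2 (Fin.snoc (fun i => v i) t)

def init (x : EuclideanSpace ℝ (Fin (m + 1))) : EuclideanSpace ℝ (Fin m) :=
  WithLp.toLp 2 fun i => x i.castSucc

@[simp] lemma snoc_last (v : EuclideanSpace ℝ (Fin m)) (t : ℝ) : snoc v t (Fin.last m) = t := by
  simp [snoc]

@[simp] lemma init_snoc (v : EuclideanSpace ℝ (Fin m)) (t : ℝ) : init (snoc v t) = v := by
  ext i; simp [init, snoc]

lemma init_add (x y : EuclideanSpace ℝ (Fin (m + 1))) : init (x + y) = init x + init y := rfl

lemma init_smul (c : ℝ) (x : EuclideanSpace ℝ (Fin (m + 1))) : init (c • x) = c • init x := rfl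

lemma snoc_sub_snoc (v w : EuclideanSpace ℝ (Fin m)) (s t : ℝ) :
    snoc v s - snoc w t = snoc (v - w) (s - t) := by
  ext i
  refine Fin.lastCases ?_ (fun j => ?_) i <;> simp [snoc]

lemma inner_snoc_snoc (v w : EuclideanSpace ℝ (Fin m)) (s t : ℝ) :
    ⟪snoc v s, snoc w t⟫ = ⟪v, w⟫ + s * t := by
  simp [snoc, PiLp.inner_apply, Fin.sum_univ_castSucc, mul_comm]

lemma norm_snoc_sq (v : EuclideanSpace ℝ (Fin m)) (t : ℝ) : ‖snoc v t‖ ^ 2 = ‖v‖ ^ 2 + t ^ 2 := by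
  rw [← real_inner_self_eq_norm_sq, ← real_inner_self_eq_norm_sq, inner_snoc_snoc, sq]

lemma norm_init_le (x : EuclideanSpace ℝ (Fin (m + 1))) : ‖init x‖ ≤ ‖x‖ := by
  rw [EuclideanSpace.norm_eq, EuclideanSpace.norm_eq, Fin.sum_univ_castSucc]
  exact Real.sqrt_le_sqrt (le_add_of_nonneg_right (sq_nonneg _))

def liftDir (v : EuclideanSpace ℝ (Fin m)) : EuclideanSpace ℝ (Fin (m + 1)) :=
  snoc v √(1 - ‖v‖ ^ 2)

lemma norm_liftDir {v : EuclideanSpace ℝ (Fin m)} (hv : ‖v‖ ≤ 1) : ‖liftDir v‖ = 1 := by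
  have h := norm_snoc_sq v √(1 - ‖v‖ ^ 2)
  rw [Real.sq_sqrt (by nlinarith [norm_nonneg v]), add_sub_cancel] at h
  exact (pow_eq_one_iff_of_nonneg (norm_nonneg _) two_ne_zero).1 h

lemma norm_sub_le_norm_liftDir_sub (v w : EuclideanSpace ℝ (Fin m)) :
    ‖v - w‖ ≤ ‖liftDir v - liftDir w‖ := by
  simpa [liftDir, snoc_sub_snoc] using norm_init_le (liftDir v - liftDir w)

lemma inner_liftDir_nonneg {v w : EuclideanSpace ℝ (Fin m)} (hv : ‖v‖ ≤ 1 / 2)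
    (hw : ‖w‖ ≤ 1 / 2) : 0 ≤ ⟪liftDir v, liftDir w⟫ := by
  have hle : ∀ {u : EuclideanSpace ℝ (Fin m)}, ‖u‖ ≤ 1 / 2 → ‖u‖ ≤ √(1 - ‖u‖ ^ 2) := fun {u} hu =>
    Real.le_sqrt_of_sq_le (by nlinarith [norm_nonneg u])
  rw [liftDir, liftDir, inner_snoc_snoc]
  nlinarith [neg_le_of_abs_le (abs_real_inner_le_norm v w), hle hv, hle hw, norm_nonneg v,
    norm_nonneg w]

end EuclideanSpace

open EuclideanSpace

section PairTubes

variable {m : ℕ} {δ : ℝ}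

lemma euclTube_snoc_inter_eq_empty {r : ℝ} {c c' v v' : EuclideanSpace ℝ (Fin m)} (hδ : 0 < δ)
    (hr : 32 * δ ≤ r) (hv : ‖v‖ ≤ 1 / 2) (hc : 3 * r / 4 ≤ ‖c - c'‖)
    (hdir : ‖liftDir v - liftDir v'‖ ≤ r / 4) :
    euclTube (m + 1) δ (snoc c 1) (liftDir v) ∩ euclTube (m + 1) δ (snoc c' 1) (liftDir v') =
      ∅ := by
  refine Set.eq_empty_iff_forall_notMem.2 fun x hx => ?_
  rw [euclTube_eq_tubeSlab, euclTube_eq_tubeSlab] at hx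
  have h := norm_sq_sub_inner_sq_le_of_mem_inter (norm_liftDir (by linarith)) hx
  have hinner : ⟪snoc (c - c') 0, liftDir v⟫ = ⟪c - c', v⟫ := by
    rw [liftDir, inner_snoc_snoc, zero_mul, add_zero]
  rw [snoc_sub_snoc, sub_self, norm_snoc_sq, hinner] at h
  have hinner_le : |⟪c - c', v⟫| ≤ ‖c - c'‖ / 2 :=
    (abs_real_inner_le_norm _ _).trans (by nlinarith [norm_nonneg (c - c')])
  have hrhs : ‖liftDir v - liftDir v'‖ / 2 + δ ≤ 5 * r / 32 := by linarith
  have hrhs_sq := pow_le_pow_left₀ (add_nonneg (by positivity) hδ.le) hrhs 2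
  have hc_sq := pow_le_pow_left₀ (by linarith) hc 2
  nlinarith [abs_le.1 hinner_le, sq_abs ⟪c - c', v⟫]

lemma volume_euclTube_liftDir_inter_le {c₀ : ℝ} {a a' : EuclideanSpace ℝ (Fin (m + 1))}
    {v v' : EuclideanSpace ℝ (Fin m)} (hδ : 0 < δ) (hv : ‖v‖ ≤ 1 / 2) (hv' : ‖v'‖ ≤ 1 / 2)
    (hdir : 8 * δ ≤ c₀ * ‖liftDir v - liftDir v'‖) :
    volume (euclTube (m + 1) δ a (liftDir v) ∩ euclTube (m + 1) δ a' (liftDir v')) ≤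
      ENNReal.ofReal c₀ * volume (euclTube (m + 1) δ a (liftDir v)) := by
  have hc₀ : 0 ≤ c₀ := by
    by_contra! h
    nlinarith [norm_nonneg (liftDir v - liftDir v')]
  have he := norm_liftDir (hv.trans (by norm_num))
  have he' := norm_liftDir (hv'.trans (by norm_num))
  rw [euclTube_eq_tubeSlab, euclTube_eq_tubeSlab]
  refine measure_tubeSlab_inter_le volume hδ he he' ?_
  calc 4 * δ ≤ c₀ * (‖liftDir v - liftDir v'‖ / 2) := by linarith
    _ ≤ c₀ * √(1 - ⟪liftDir v, liftDir v'⟫ ^ 2) := by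
      gcongr
      exact norm_sub_div_two_le_sqrt_one_sub_inner_sq he he' (inner_liftDir_nonneg hv hv')

def pairCenter (p q : EuclideanSpace ℝ (Fin m)) : EuclideanSpace ℝ (Fin (m + 1)) :=
  snoc ((2⁻¹ : ℝ) • (p + q)) 1

def pairDir (p q : EuclideanSpace ℝ (Fin m)) : EuclideanSpace ℝ (Fin (m + 1)) :=
  liftDir ((2⁻¹ : ℝ) • (q - p))

lemma norm_half_smul_sub_le {p q : EuclideanSpace ℝ (Fin m)} (h : dist q p ≤ 1) :
    ‖(2⁻¹ : ℝ) • (q - p)‖ ≤ 1 / 2 := by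
  rw [norm_smul, ← dist_eq_norm]; norm_num; linarith

lemma essentiallyDistinct_pairTubes {c₀ r : ℝ} {P : Finset (EuclideanSpace ℝ (Fin m))}
    (hδ : 0 < δ) (hr : 32 * δ ≤ r) (hc₀r : 32 * δ ≤ c₀ * r)
    (hsep : (P : Set (EuclideanSpace ℝ (Fin m))).Pairwise fun p q => r ≤ dist p q)
    (hdiam : ∀ p ∈ P, ∀ q ∈ P, dist p q ≤ 1) :
    EssentiallyDistinct (m + 1) δ c₀ (fun z : P × P => pairCenter z.1 z.2)
      (fun z => pairDir z.1 z.2) := by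
  rintro ⟨⟨p, hp⟩, ⟨q, hq⟩⟩ ⟨⟨p', hp'⟩, ⟨q', hq'⟩⟩ hne
  simp only [pairCenter, pairDir]
  set v := (2⁻¹ : ℝ) • (q - p)
  set v' := (2⁻¹ : ℝ) • (q' - p')
  have hv : ‖v‖ ≤ 1 / 2 := norm_half_smul_sub_le (hdiam q hq p hp)
  have hv' : ‖v'‖ ≤ 1 / 2 := norm_half_smul_sub_le (hdiam q' hq' p' hp')
  rcases le_or_gt (r / 4) ‖liftDir v - liftDir v'‖ with hfar | hnear
  · refine volume_euclTube_liftDir_inter_le hδ hv hv' ?_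
    have hc₀ : 0 ≤ c₀ := by nlinarith
    nlinarith
  have hvv' : ‖v - v'‖ < r / 4 := (norm_sub_le_norm_liftDir_sub v v').trans_lt hnear
  have hpp' : p ≠ p' := by
    rintro rfl
    have hqq' : q ≠ q' := fun h => hne (by subst h; rfl)
    have hdist : dist q q' = 2 * ‖v - v'‖ := by
      rw [dist_eq_norm, show q - q' = (2 : ℝ) • (v - v') by simp only [v, v']; module, norm_smul]
      norm_num
    linarith [hsep hq hq' hqq']
  have hc : 3 * r / 4 ≤ ‖(2⁻¹ : ℝ) • (p + q) - (2⁻¹ : ℝ) • (p' + q')‖ := by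
    rw [show (2⁻¹ : ℝ) • (p + q) - (2⁻¹ : ℝ) • (p' + q') = (p - p') + (v - v') by
      simp only [v, v']; module]
    have hpp'_dist : r ≤ ‖p - p'‖ := dist_eq_norm p p' ▸ hsep hp hp' hpp'
    linarith [norm_le_add_norm_add (p - p') (v - v')]
  rw [euclTube_snoc_inter_eq_empty hδ hr hv hc hnear.le, measure_empty]
  exact zero_le

lemma euclTube_pair_subset_cylSet {D E : Set (EuclideanSpace ℝ (Fin m))}
    {p q : EuclideanSpace ℝ (Fin m)} (hδ : δ ≤ 1) (hD : Convex ℝ D)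
    (hDE : ∀ z ∈ D, closedBall z (δ / 2) ⊆ E) (hp : p ∈ D) (hq : q ∈ D) :
    euclTube (m + 1) δ (pairCenter p q) (pairDir p q) ⊆
      cylSet (m + 1) m.succ_pos E (Set.Icc 0 2) := by
  rintro x ⟨ht, hw⟩
  set v := (2⁻¹ : ℝ) • (q - p)
  set s := √(1 - ‖v‖ ^ 2)
  set t := ⟪x - pairCenter p q, pairDir p q⟫
  set w := x - pairCenter p q - t • pairDir p q
  have hx : x = pairCenter p q + t • pairDir p q + w := by simp only [w]; abel
  have ht' := abs_le.1 ht
  constructor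
  · show init x ∈ E
    have hinit : init x = ((1 - t) / 2) • p + ((1 + t) / 2) • q + init w := by
      rw [hx, init_add, init_add, init_smul, pairCenter, pairDir, liftDir, init_snoc, init_snoc]
      module
    refine hDE _ (hD hp hq (show 0 ≤ (1 - t) / 2 by linarith) (show 0 ≤ (1 + t) / 2 by linarith)
      (by ring)) ?_
    rw [hinit, mem_closedBall, dist_eq_norm, add_sub_cancel_left]
    exact (norm_init_le w).trans hw
  · show x (Fin.last m) ∈ Set.Icc 0 2
    have hlast : x (Fin.last m) = 1 + t * s + w (Fin.last m) := by
      rw [hx]; simp [pairCenter, pairDir, liftDir, s, v]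
    have hw_last : |w (Fin.last m)| ≤ δ / 2 := (PiLp.norm_apply_le w _).trans hw
    have hs : |s| ≤ 1 := by
      rw [abs_of_nonneg (Real.sqrt_nonneg _)]
      exact Real.sqrt_le_one.2 (by linarith [sq_nonneg ‖v‖])
    have hts : |t * s| ≤ 1 / 2 := by
      rw [abs_mul]; nlinarith [abs_nonneg t, abs_nonneg s]
    rw [hlast]
    constructor <;> linarith [abs_le.1 hw_last, abs_le.1 hts]

lemma exists_essentiallyDistinct_tubes_subset_cylSet {c₀ r : ℝ}
    {P : Finset (EuclideanSpace ℝ (Fin m))} {D E : Set (EuclideanSpace ℝ (Fin m))}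
    (hδ : 0 < δ) (hδ₁ : δ ≤ 1) (hr : 32 * δ ≤ r) (hc₀r : 32 * δ ≤ c₀ * r)
    (hsep : (P : Set (EuclideanSpace ℝ (Fin m))).Pairwise fun p q => r ≤ dist p q)
    (hdiam : ∀ p ∈ P, ∀ q ∈ P, dist p q ≤ 1) (hD : Convex ℝ D)
    (hDE : ∀ z ∈ D, closedBall z (δ / 2) ⊆ E) (hPD : ↑P ⊆ D) :
    ∃ (M : ℕ) (a e : Fin M → EuclideanSpace ℝ (Fin (m + 1))),
      P.card ^ 2 ≤ M ∧ (∀ i, ‖e i‖ = 1) ∧ EssentiallyDistinct (m + 1) δ c₀ a e ∧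
      ∀ i, euclTube (m + 1) δ (a i) (e i) ⊆ cylSet (m + 1) m.succ_pos E (Set.Icc 0 2) := by
  set σ := (Fintype.equivFin (P × P)).symm
  refine ⟨Fintype.card (P × P), fun i => pairCenter (σ i).1 (σ i).2,
    fun i => pairDir (σ i).1 (σ i).2, by simp [sq], fun i => ?_, ?_, fun i => ?_⟩
  · exact norm_liftDir ((norm_half_smul_sub_le (hdiam _ (σ i).2.2 _ (σ i).1.2)).trans (by norm_num))
  · exact (essentiallyDistinct_pairTubes hδ hr hc₀r hsep hdiam).comp σ.injective
  · exact euclTube_pair_subset_cylSet hδ₁ hD hDE (hPD (σ i).1.2) (hPD (σ i).2.2)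

end PairTubes

section Packing

lemma Convex.setOf_closedBall_subset {F : Type*} [NormedAddCommGroup F] [NormedSpace ℝ F]
    {E : Set F} (hE : Convex ℝ E) (ρ : ℝ) : Convex ℝ {z | closedBall z ρ ⊆ E} := by
  intro z₁ h₁ z₂ h₂ a b ha hb hab y hy
  set u := y - (a • z₁ + b • z₂)
  have hu : ‖u‖ ≤ ρ := by rw [← dist_eq_norm]; exact hy
  have hy' : y = a • (z₁ + u) + b • (z₂ + u) := by
    rw [smul_add, smul_add, add_add_add_comm, ← add_smul, hab, one_smul]; simp only [u]; abel
  rw [hy']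
  exact hE (h₁ (by simpa [dist_eq_norm] using hu)) (h₂ (by simpa [dist_eq_norm] using hu)) ha hb hab

lemma exists_pairwise_le_dist_subset_biUnion_ball {X : Type*} [MetricSpace X] (D : Set X)
    {r : ℝ} (hr : 0 < r) :
    ∃ P ⊆ D, P.Pairwise (fun x y => r ≤ dist x y) ∧ D ⊆ ⋃ p ∈ P, ball p r := by
  set S := {P : Set X | P ⊆ D ∧ P.Pairwise fun x y => r ≤ dist x y}
  obtain ⟨P, ⟨hPD, hPsep⟩, hPmax⟩ := zorn_subset S fun c hcS hc =>
    ⟨⋃₀ c, ⟨Set.sUnion_subset fun P hP => (hcS hP).1,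
      (Set.pairwise_sUnion hc.directedOn).2 fun P hP => (hcS hP).2⟩,
      fun _ => Set.subset_sUnion_of_mem⟩
  refine ⟨P, hPD, hPsep, fun z hz => ?_⟩
  by_contra! hfar
  simp only [Set.mem_iUnion, mem_ball, not_exists, not_lt] at hfar
  have hzP : z ∈ P := hPmax ⟨Set.insert_subset hz hPD, hPsep.insert fun p hp _ =>
    ⟨hfar p hp, dist_comm z p ▸ hfar p hp⟩⟩ (Set.subset_insert z P) (Set.mem_insert z P)
  linarith [hfar z hzP, dist_self z]

variable {F : Type*} [NormedAddCommGroup F] [MeasurableSpace F] [BorelSpace F] (μ : Measure F)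
  [μ.IsAddHaarMeasure]

lemma Set.Pairwise.finite_of_closedBall_subset {P E : Set F} {ρ r : ℝ}
    (hsep : P.Pairwise fun x y => r ≤ dist x y) (hρ : 0 < ρ) (hρr : 2 * ρ < r)
    (hPE : ∀ p ∈ P, closedBall p ρ ⊆ E) (hE : μ E ≠ ∞) : P.Finite := by
  have hfin := Measure.finite_const_le_meas_of_disjoint_iUnion μ
    (measure_closedBall_pos μ 0 hρ) (As := fun p : P => closedBall (p : F) ρ)
    (fun _ => measurableSet_closedBall)
    (fun p q hpq => closedBall_disjoint_closedBall (by
      linarith [hsep p.2 q.2 (Subtype.coe_ne_coe.2 hpq)]))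
    (ne_top_of_le_ne_top hE (measure_mono (Set.iUnion_subset fun p => hPE p p.2)))
  simp only [Measure.addHaar_closedBall_center, le_refl, Set.ofPred_true] at hfin
  exact Set.finite_coe_iff.1 (Set.finite_univ_iff.1 hfin)

lemma exists_finset_pairwise_le_dist_subset_biUnion_closedBall {E S : Set F} {ρ r : ℝ}
    (hS : E = ⋃ x ∈ S, closedBall x ρ) (hE : μ E ≠ ∞) (hρ : 0 < ρ) (hρr : 2 * ρ < r) :
    ∃ P : Finset F, ↑P ⊆ {z | closedBall z ρ ⊆ E} ∧
      (P : Set F).Pairwise (fun x y => r ≤ dist x y) ∧ E ⊆ ⋃ p ∈ P, closedBall p (ρ + r) := by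
  obtain ⟨P, hPD, hPsep, hDP⟩ :=
    exists_pairwise_le_dist_subset_biUnion_ball {z | closedBall z ρ ⊆ E} (r := r) (by linarith)
  lift P to Finset F using hPsep.finite_of_closedBall_subset μ hρ hρr hPD hE
  refine ⟨P, hPD, hPsep, fun x hx => ?_⟩
  obtain ⟨s, hs, hxs⟩ := Set.mem_iUnion₂.1 (hS ▸ hx)
  have hsD : closedBall s ρ ⊆ E := hS ▸ Set.subset_biUnion_of_mem (u := fun x => closedBall x ρ) hs
  obtain ⟨p, hp, hsp⟩ := Set.mem_iUnion₂.1 (hDP hsD)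
  exact Set.mem_iUnion₂.2 ⟨p, hp, (dist_triangle x s p).trans
    (add_le_add (mem_closedBall.1 hxs) (mem_ball.1 hsp).le)⟩

lemma measure_le_card_mul_of_subset_biUnion_closedBall [NormedSpace ℝ F] [FiniteDimensional ℝ F]
    {E : Set F} (P : Finset F) {R : ℝ} (hR : 0 ≤ R) (hE : E ⊆ ⋃ p ∈ P, closedBall p R) :
    μ E ≤ P.card * (ENNReal.ofReal (R ^ Module.finrank ℝ F) * μ (ball 0 1)) :=
  calc μ E ≤ ∑ p ∈ P, μ (closedBall p R) := (measure_mono hE).trans (measure_biUnion_finset_le _ _)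
    _ = P.card * (ENNReal.ofReal (R ^ Module.finrank ℝ F) * μ (ball 0 1)) := by
      simp [Measure.addHaar_closedBall μ _ hR]

end Packing

lemma div_le_card_of_subset_biUnion_closedBall {m : ℕ} {E : Set (EuclideanSpace ℝ (Fin m))}
    (P : Finset (EuclideanSpace ℝ (Fin m))) {v K δ : ℝ} (hδ : 0 < δ) (hK : 0 < K)
    (hvol : ENNReal.ofReal (v * δ ^ m) ≤ volume E) (hE : E ⊆ ⋃ p ∈ P, closedBall p (K * δ)) :
    v / (K ^ m * (volume (ball (0 : EuclideanSpace ℝ (Fin m)) 1)).toReal) ≤ P.card := by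
  have hcount := hvol.trans
    (measure_le_card_mul_of_subset_biUnion_closedBall volume P (by positivity) hE)
  rw [finrank_euclideanSpace_fin, ← ENNReal.ofReal_toReal measure_ball_lt_top.ne,
    ← ENNReal.ofReal_natCast, ← ENNReal.ofReal_mul (by positivity),
    ← ENNReal.ofReal_mul (by positivity), ENNReal.ofReal_le_ofReal_iff (by positivity),
    mul_pow] at hcount
  have hω : 0 < (volume (ball (0 : EuclideanSpace ℝ (Fin m)) 1)).toReal :=
    ENNReal.toReal_pos (measure_ball_pos _ _ one_pos).ne' measure_ball_lt_top.ne
  rw [div_le_iff₀ (by positivity)]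
  refine le_of_mul_le_mul_right ?_ (pow_pos hδ m)
  linarith

/-- a convex discretized set of the right volume supports `∼N` essentially
distinct δ-tubes in the cylinder over it. -/
theorem statement6 (n : ℕ) (hn : 2 ≤ n) (c₀ c₁ : ℝ)
    (hc₀ : c₀ ∈ Set.Ioo (0 : ℝ) 1) (hc₁ : c₁ ∈ Set.Ioo (0 : ℝ) 1) :
    ∃ c₂ : ℝ, 0 < c₂ ∧
      ∀ δ : ℝ, δ ∈ Set.Ioo (0 : ℝ) (1 / 100) →
      ∀ N : ℝ, 1 ≤ N →
      ∀ E : Set (EuclideanSpace ℝ (Fin (n - 1))),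
        Convex ℝ E →
        IsDiscretized (n - 1) (9 * δ) E →
        Metric.diam E ≤ 1 →
        ENNReal.ofReal (c₁ * Real.sqrt N * δ ^ (n - 1)) ≤ volume E →
        volume E ≤ ENNReal.ofReal (c₁⁻¹ * Real.sqrt N * δ ^ (n - 1)) →
        ∃ (M : ℕ) (a e : Fin M → EuclideanSpace ℝ (Fin n)),
          c₂ * N ≤ (M : ℝ) ∧ (∀ i, ‖e i‖ = 1) ∧ EssentiallyDistinct n δ c₀ a e ∧
          ∀ i, euclTube n δ (a i) (e i) ⊆
            cylSet n (by omega) E (Set.Icc (0 : ℝ) 2) := by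
  obtain ⟨m, rfl⟩ : ∃ m, n = m + 1 := ⟨n - 1, by omega⟩
  obtain ⟨hc₀, hc₀₁⟩ := hc₀
  set ω := (volume (ball (0 : EuclideanSpace ℝ (Fin m)) 1)).toReal
  have hω : 0 < ω := ENNReal.toReal_pos (measure_ball_pos _ _ one_pos).ne' measure_ball_lt_top.ne
  obtain ⟨hc₁, -⟩ := hc₁
  set A := c₁ / ((9 + 32 / c₀) ^ m * ω)
  refine ⟨A ^ 2, by positivity, fun δ ⟨hδ, hδ₁⟩ N hN E hE hdisc hdiam hvol hvol' => ?_⟩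
  change Set (EuclideanSpace ℝ (Fin m)) at E
  obtain ⟨S, hS⟩ : ∃ S : Set (EuclideanSpace ℝ (Fin m)), E = ⋃ x ∈ S, closedBall x (9 * δ) := hdisc
  simp only [Nat.add_sub_cancel] at hvol hvol'
  set r := 32 * δ / c₀
  have hr : 32 * δ ≤ r := by rw [le_div_iff₀ hc₀]; nlinarith
  obtain ⟨P, hPD, hPsep, hcover⟩ := exists_finset_pairwise_le_dist_subset_biUnion_closedBall volume
    hS (ne_top_of_le_ne_top ENNReal.ofReal_ne_top hvol') (by positivity) (by linarith)
  have hPE : ∀ p ∈ P, p ∈ E := fun p hp => hPD hp (mem_closedBall_self (by positivity))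
  -- `Metric.diam` vanishes on unbounded sets, so `hdiam` is only usable once `E` is bounded.
  have hbdd : Bornology.IsBounded E :=
    ((Bornology.isBounded_biUnion_finset P).2 fun _ _ => isBounded_closedBall).subset hcover
  rw [show 9 * δ + r = (9 + 32 / c₀) * δ by ring] at hcover
  have hcard := div_le_card_of_subset_biUnion_closedBall P hδ (by positivity) hvol hcover
  obtain ⟨M, a, e, hM, he, hED, hsub⟩ := exists_essentiallyDistinct_tubes_subset_cylSet hδ
    (by linarith) hr (mul_div_cancel₀ _ hc₀.ne').ge hPsep
    (fun p hp q hq => (dist_le_diam_of_mem hbdd (hPE p hp) (hPE q hq)).trans hdiam)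
    (hE.setOf_closedBall_subset _)
    (fun z hz => (closedBall_subset_closedBall (by linarith)).trans hz) hPD
  refine ⟨M, a, e, ?_, he, hED, hsub⟩
  calc A ^ 2 * N = (c₁ * √N / ((9 + 32 / c₀) ^ m * ω)) ^ 2 := by
        rw [div_pow (c₁ * √N), mul_pow c₁, Real.sq_sqrt (by linarith)]; ring
    _ ≤ (P.card : ℝ) ^ 2 := pow_le_pow_left₀ (by positivity) hcard 2
    _ ≤ M := by exact_mod_cast hM
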